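/- arXiv:1002.4098 — 8 statements merged into one kernel-verified Lean document; each statement's English description precedes it below -/
import Mathlib

section
/- Let 𝒜 be the family of compact subintervals of [a,b] ⊆ ℝ, let ν([c,d]) = d - c, and let μ : 𝒜 → ℝ be additive over interval decompositions (μ([c,e]) = μ([c,d]) + μ([d,e]) for c ≤ d ≤ e). Suppose g : [a,b] → ℝ is the strict derivative of μ with respect to ν on [a,b]: for every x ∈ [a,b] and ε > 0 there is δ > 0 such that |μ(I)/ν(I) - g(x)| < ε for all nondegenerate intervals I ∈ 𝒜 with I ⊆ (x-δ, x+δ). Then for every nondegenerate interval I ⊆ [a,b], (inf over [a,b] of g) ≤ μ(I)/ν(I) ≤ (sup over [a,b] of g). -/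
/-!
Fix the left endpoint: `F t = μ a t` is a point function with `μ c d = F d - F c`, and the
strict-derivative hypothesis says exactly that `F` is differentiable on `[a,b]` with derivative
`g`. Lagrange's mean value theorem then writes `μ c d / (d - c)` as a value `g ξ`. The strict
derivative is also continuous, so `g` is bounded on the compact `[a,b]` and `g ξ` lies between the
infimum and the supremum.
-/

/-- `μ c d` is the value of the set function on the interval `[c,d]`;
interval-additivity: `μ [c,e] = μ [c,d] + μ [d,e]` for `c ≤ d ≤ e` in `[a,b]`. -/
def IntervalAdditive (a b : ℝ) (μ : ℝ → ℝ → ℝ) : Prop :=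
  ∀ c d e : ℝ, a ≤ c → c ≤ d → d ≤ e → e ≤ b → μ c e = μ c d + μ d e

/-- `g` is the Peano strict derivative of the interval function `μ` with respect
to length on `[a,b]`: for every `x ∈ [a,b]` and `ε > 0` there is `δ > 0` with
`|μ [c,d] / (d - c) - g x| < ε` for every nondegenerate interval
`[c,d] ⊆ (x - δ, x + δ) ∩ [a,b]`. -/
def PeanoStrictDeriv (a b : ℝ) (μ : ℝ → ℝ → ℝ) (g : ℝ → ℝ) : Prop :=
  ∀ x ∈ Set.Icc a b, ∀ ε > 0, ∃ δ > 0, ∀ c d : ℝ, a ≤ c → c < d → d ≤ b →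
    Set.Icc c d ⊆ Set.Ioo (x - δ) (x + δ) → |μ c d / (d - c) - g x| < ε

open Set

lemma exists_Icc_subset_Ioo_of_mem_Icc {a b y η : ℝ} (hab : a < b) (hy : y ∈ Icc a b)
    (hη : 0 < η) : ∃ c d, a ≤ c ∧ c < d ∧ d ≤ b ∧ Icc c d ⊆ Ioo (y - η) (y + η) := by
  refine ⟨max a (y - η / 2), min b (y + η / 2), le_max_left _ _,
    max_lt (lt_min hab (by linarith [hy.1])) (lt_min (by linarith [hy.2]) (by linarith)),
    min_le_left _ _, fun t ht => ⟨?_, ?_⟩⟩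
  · linarith [le_max_right a (y - η / 2), ht.1]
  · linarith [min_le_right b (y + η / 2), ht.2]

lemma IntervalAdditive.slope_eq {a b c d : ℝ} {μ : ℝ → ℝ → ℝ} (hμ : IntervalAdditive a b μ)
    (hac : a ≤ c) (hcd : c ≤ d) (hdb : d ≤ b) : slope (μ a) c d = μ c d / (d - c) := by
  rw [slope_def_field, hμ a c d le_rfl hac hcd hdb, add_sub_cancel_left]

namespace PeanoStrictDeriv

variable {a b : ℝ} {μ : ℝ → ℝ → ℝ} {g : ℝ → ℝ}

theorem continuousOn (hab : a < b) (hg : PeanoStrictDeriv a b μ g) :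
    ContinuousOn g (Icc a b) := by
  rw [Metric.continuousOn_iff]
  intro x hx ε hε
  obtain ⟨δ, hδ, hx_avg⟩ := hg x hx (ε / 2) (half_pos hε)
  refine ⟨δ / 2, half_pos hδ, fun y hy hyx => ?_⟩
  obtain ⟨δ', hδ', hy_avg⟩ := hg y hy (ε / 2) (half_pos hε)
  have hyx' := abs_lt.mp (Real.dist_eq y x ▸ hyx)
  -- an interval near `y` is also near `x`, and its average is close to both `g x` and `g y`
  obtain ⟨c, d, hac, hcd, hdb, hsub⟩ :=
    exists_Icc_subset_Ioo_of_mem_Icc hab hy (lt_min (half_pos hδ) hδ')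
  have hnear_x : |μ c d / (d - c) - g x| < ε / 2 := hx_avg c d hac hcd hdb <|
    hsub.trans <| Ioo_subset_Ioo (by linarith [min_le_left (δ / 2) δ'])
      (by linarith [min_le_left (δ / 2) δ'])
  have hnear_y : |μ c d / (d - c) - g y| < ε / 2 := hy_avg c d hac hcd hdb <|
    hsub.trans <| Ioo_subset_Ioo (by linarith [min_le_right (δ / 2) δ'])
      (by linarith [min_le_right (δ / 2) δ'])
  rw [Real.dist_eq]
  calc |g y - g x| ≤ |g y - μ c d / (d - c)| + |μ c d / (d - c) - g x| := abs_sub_le _ _ _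
    _ < ε := by rw [abs_sub_comm (g y)]; linarith

theorem hasDerivWithinAt (hμ : IntervalAdditive a b μ) (hg : PeanoStrictDeriv a b μ g)
    {x : ℝ} (hx : x ∈ Icc a b) : HasDerivWithinAt (μ a) (g x) (Icc a b) x := by
  rw [hasDerivWithinAt_iff_tendsto_slope, Metric.tendsto_nhdsWithin_nhds]
  intro ε hε
  obtain ⟨δ, hδ, havg⟩ := hg x hx ε hε
  refine ⟨δ, hδ, fun t ⟨ht, htx⟩ hdist => ?_⟩
  have hdist' := abs_lt.mp (Real.dist_eq t x ▸ hdist)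
  rw [Real.dist_eq]
  rcases lt_or_gt_of_ne (htx : t ≠ x) with htx | hxt
  · rw [slope_comm, hμ.slope_eq ht.1 htx.le hx.2]
    exact havg t x ht.1 htx hx.2 fun s hs => ⟨by linarith [hs.1], by linarith [hs.2]⟩
  · rw [hμ.slope_eq hx.1 hxt.le ht.2]
    exact havg x t hx.1 hxt ht.2 fun s hs => ⟨by linarith [hs.1], by linarith [hs.2]⟩

theorem exists_mem_Ioo_eq_div (hμ : IntervalAdditive a b μ) (hg : PeanoStrictDeriv a b μ g)
    {c d : ℝ} (hac : a ≤ c) (hcd : c < d) (hdb : d ≤ b) :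
    ∃ ξ ∈ Ioo c d, g ξ = μ c d / (d - c) := by
  have hsub : Icc c d ⊆ Icc a b := Icc_subset_Icc hac hdb
  have hderiv : ∀ x ∈ Icc c d, HasDerivWithinAt (μ a) (g x) (Icc c d) x := fun x hx =>
    (hg.hasDerivWithinAt hμ (hsub hx)).mono hsub
  obtain ⟨ξ, hξ, hgξ⟩ := exists_hasDerivAt_eq_slope (μ a) g hcd
    (fun x hx => (hderiv x hx).continuousWithinAt)
    (fun x hx => (hderiv x (Ioo_subset_Icc_self hx)).hasDerivAt (Icc_mem_nhds hx.1 hx.2))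
  exact ⟨ξ, hξ, by rw [hgξ, ← slope_def_field, hμ.slope_eq hac hcd.le hdb]⟩

end PeanoStrictDeriv

/-- Peano's Theorem 13 (1887): the average `μ(I)/ν(I)` is bounded between the
infimum and the supremum of the strict derivative `g` over `[a,b]`. -/
theorem peano_mean_value_inequality (a b : ℝ) (μ : ℝ → ℝ → ℝ) (g : ℝ → ℝ)
    (hμ : IntervalAdditive a b μ) (hg : PeanoStrictDeriv a b μ g) :
    ∀ c d : ℝ, a ≤ c → c < d → d ≤ b →
      sInf (g '' Set.Icc a b) ≤ μ c d / (d - c) ∧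
        μ c d / (d - c) ≤ sSup (g '' Set.Icc a b) := by
  intro c d hac hcd hdb
  obtain ⟨ξ, hξ, hgξ⟩ := hg.exists_mem_Ioo_eq_div hμ hac hcd hdb
  have hξ_mem : g ξ ∈ g '' Icc a b := mem_image_of_mem g ⟨hac.trans hξ.1.le, hξ.2.le.trans hdb⟩
  have hcompact : IsCompact (g '' Icc a b) :=
    isCompact_Icc.image_of_continuousOn (hg.continuousOn (hac.trans_lt (hcd.trans_le hdb)))
  rw [← hgξ]
  exact ⟨csInf_le hcompact.bddBelow hξ_mem, le_csSup hcompact.bddAbove hξ_mem⟩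
end

section
/- Let 𝒜 be the compact subintervals of [a,b], ν the length function, and μ₁, μ₂ : 𝒜 → ℝ interval-additive set functions. If μ₁ and μ₂ have strict derivatives with respect to ν at every point of [a,b] and these derivatives are equal, then μ₁(I) = μ₂(I) for every I ∈ 𝒜. -/
open Set

namespace IntervalAdditive

variable {a b : ℝ} {μ : ℝ → ℝ → ℝ}

theorem self_eq_zero (hμ : IntervalAdditive a b μ) {c : ℝ} (hc : c ∈ Icc a b) : μ c c = 0 := by
  have := hμ c c c hc.1 le_rfl le_rfl hc.2
  linarith

theorem eq_sub (hμ : IntervalAdditive a b μ) {c d : ℝ} (hac : a ≤ c) (hcd : c ≤ d)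
    (hdb : d ≤ b) : μ c d = μ a d - μ a c := by
  rw [hμ a c d le_rfl hac hcd hdb]
  ring

theorem slope_eq_s5 (hμ : IntervalAdditive a b μ) {x y : ℝ} (hx : x ∈ Icc a b)
    (hy : y ∈ Icc a b) (hxy : x ≠ y) :
    slope (μ a) x y = μ (min x y) (max x y) / (max x y - min x y) := by
  rcases hxy.lt_or_gt with hlt | hlt
  · rw [min_eq_left hlt.le, max_eq_right hlt.le, slope_def_field,
      hμ.eq_sub hx.1 hlt.le hy.2]
  · rw [min_eq_right hlt.le, max_eq_left hlt.le, slope_comm, slope_def_field,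
      hμ.eq_sub hy.1 hlt.le hx.2]

theorem hasDerivWithinAt (hμ : IntervalAdditive a b μ) {g : ℝ → ℝ}
    (hg : PeanoStrictDeriv a b μ g) {x : ℝ} (hx : x ∈ Icc a b) :
    HasDerivWithinAt (μ a) (g x) (Icc a b) x := by
  rw [hasDerivWithinAt_iff_tendsto_slope, Metric.tendsto_nhdsWithin_nhds]
  intro ε hε
  obtain ⟨δ, hδ, H⟩ := hg x hx ε hε
  refine ⟨δ, hδ, fun y ⟨hy, hyx⟩ hdist => ?_⟩
  have hxy : x ≠ y := Ne.symm hyx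
  rw [Real.dist_eq, hμ.slope_eq_s5 hx hy hxy]
  refine H _ _ (le_min hx.1 hy.1) (min_lt_max.2 hxy) (max_le hx.2 hy.2) ?_
  rw [← uIcc]
  refine ordConnected_Ioo.uIcc_subset ⟨by linarith, by linarith⟩ ?_
  rw [← Real.ball_eq_Ioo]
  exact hdist

theorem hasDerivWithinAt_Ici (hμ : IntervalAdditive a b μ) {g : ℝ → ℝ}
    (hg : PeanoStrictDeriv a b μ g) {x : ℝ} (hx : x ∈ Ico a b) :
    HasDerivWithinAt (μ a) (g x) (Ici x) x :=
  (hμ.hasDerivWithinAt hg (Ico_subset_Icc_self hx)).mono_of_mem_nhdsWithin <|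
    Filter.mem_of_superset (Icc_mem_nhdsGE hx.2) (Icc_subset_Icc_left hx.1)

theorem continuousOn_primitive (hμ : IntervalAdditive a b μ) {g : ℝ → ℝ}
    (hg : PeanoStrictDeriv a b μ g) : ContinuousOn (μ a) (Icc a b) :=
  fun _ hx => (hμ.hasDerivWithinAt hg hx).continuousWithinAt

end IntervalAdditive

/-- Peano's uniqueness corollary: two interval-additive set functions with the
same strict derivative with respect to length on `[a,b]` are equal. -/
theorem peano_equal_strict_derivatives (a b : ℝ) (μ₁ μ₂ : ℝ → ℝ → ℝ) (g : ℝ → ℝ)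
    (hμ₁ : IntervalAdditive a b μ₁) (hμ₂ : IntervalAdditive a b μ₂)
    (h₁ : PeanoStrictDeriv a b μ₁ g) (h₂ : PeanoStrictDeriv a b μ₂ g) :
    ∀ c d : ℝ, a ≤ c → c ≤ d → d ≤ b → μ₁ c d = μ₂ c d := by
  intro c d hac hcd hdb
  have hab : a ≤ b := hac.trans (hcd.trans hdb)
  have hprim : ∀ y ∈ Icc a b, μ₁ a y = μ₂ a y :=
    eq_of_has_deriv_right_eq (fun _ hx => hμ₁.hasDerivWithinAt_Ici h₁ hx)
      (fun _ hx => hμ₂.hasDerivWithinAt_Ici h₂ hx) (hμ₁.continuousOn_primitive h₁)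
      (hμ₂.continuousOn_primitive h₂)
      (by rw [hμ₁.self_eq_zero ⟨le_rfl, hab⟩, hμ₂.self_eq_zero ⟨le_rfl, hab⟩])
  rw [hμ₁.eq_sub hac hcd hdb, hμ₂.eq_sub hac hcd hdb, hprim d ⟨hac.trans hcd, hdb⟩,
    hprim c ⟨hac, hcd.trans hdb⟩]
end

section
/- Let 𝒜 be the compact subintervals of [a,b], ν the length function, and μ : 𝒜 → ℝ interval-additive. If the strict derivative of μ with respect to ν exists and equals 0 at every point of [a,b], then μ(I) = 0 for every I ∈ 𝒜. -/
/-!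
Compactness of `[a,b]` makes the vanishing of the strict derivative uniform: a Lebesgue number `η`
of the cover by the neighbourhoods `(x - δₓ, x + δₓ)` gives `|μ [c,d]| ≤ ε (d - c)` for every
subinterval shorter than `η`. Cutting an arbitrary subinterval into pieces of length `η / 2` and
using additivity extends this bound to all of them, and `ε` is arbitrary.
-/

open Metric Filter Topology

theorem IntervalAdditive.apply_self_eq_zero {a b : ℝ} {μ : ℝ → ℝ → ℝ}
    (hμ : IntervalAdditive a b μ) {c : ℝ} (hac : a ≤ c) (hcb : c ≤ b) : μ c c = 0 := by
  linarith [hμ c c c hac le_rfl le_rfl hcb]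

theorem PeanoStrictDeriv.exists_pos_abs_le_mul_of_zero {a b : ℝ} {μ : ℝ → ℝ → ℝ}
    (h : PeanoStrictDeriv a b μ (fun _ => 0)) {ε : ℝ} (hε : 0 < ε) :
    ∃ η > 0, ∀ c d : ℝ, a ≤ c → c < d → d ≤ b → d - c < η → |μ c d| ≤ ε * (d - c) := by
  choose δ hδ hsmall using fun x : Set.Icc a b => h x x.2 ε hε
  have hcover : Set.Icc a b ⊆ ⋃ x : Set.Icc a b, ball (x : ℝ) (δ x) := fun x hx =>
    Set.mem_iUnion.mpr ⟨⟨x, hx⟩, mem_ball_self (hδ _)⟩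
  obtain ⟨η, hη, hleb⟩ :=
    lebesgue_number_lemma_of_metric isCompact_Icc (fun _ => isOpen_ball) hcover
  refine ⟨η, hη, fun c d hac hcd hdb hdc => ?_⟩
  obtain ⟨x, hx⟩ := hleb c ⟨hac, hcd.le.trans hdb⟩
  have hcd_ball : Set.Icc c d ⊆ ball c η := fun y hy => by
    rw [Real.ball_eq_Ioo]
    exact ⟨by linarith [hy.1], by linarith [hy.2]⟩
  have hratio := hsmall x c d hac hcd hdb (by rw [← Real.ball_eq_Ioo]; exact hcd_ball.trans hx)
  rw [sub_zero, abs_div, abs_of_pos (sub_pos.mpr hcd), div_lt_iff₀ (sub_pos.mpr hcd)] at hratio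
  exact hratio.le

theorem IntervalAdditive.abs_le_mul_of_forall_lt {a b : ℝ} {μ : ℝ → ℝ → ℝ}
    (hμ : IntervalAdditive a b μ) {ε η : ℝ} (hη : 0 < η)
    (hshort : ∀ c d : ℝ, a ≤ c → c < d → d ≤ b → d - c < η → |μ c d| ≤ ε * (d - c))
    {c d : ℝ} (hac : a ≤ c) (hcd : c ≤ d) (hdb : d ≤ b) : |μ c d| ≤ ε * (d - c) := by
  obtain ⟨n, hn⟩ := exists_nat_ge ((d - c) / (η / 2))
  rw [div_le_iff₀ (by positivity)] at hn
  induction n generalizing c with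
  | zero =>
    obtain rfl : c = d := by push_cast at hn; linarith
    simp [hμ.apply_self_eq_zero hac hdb]
  | succ n ih =>
    rcases hcd.eq_or_lt with rfl | hcd
    · simp [hμ.apply_self_eq_zero hac hdb]
    rcases lt_or_ge (d - c) η with hdc | hdc
    · exact hshort c d hac hcd hdb hdc
    set e := c + η / 2 with he
    have hce : c < e := by linarith
    have hed : e ≤ d := by linarith
    have hfirst := hshort c e hac hce (hed.trans hdb) (by linarith)
    have hrest := ih (hac.trans hce.le) hed (by push_cast at hn; linarith)
    calc |μ c d| = |μ c e + μ e d| := by rw [hμ c e d hac hce.le hed hdb]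
      _ ≤ |μ c e| + |μ e d| := abs_add_le _ _
      _ ≤ ε * (e - c) + ε * (d - e) := add_le_add hfirst hrest
      _ = ε * (d - c) := by ring

theorem eq_zero_of_forall_abs_le_mul {x L : ℝ} (h : ∀ ε > 0, |x| ≤ ε * L) : x = 0 := by
  have hlim : Tendsto (fun ε : ℝ => ε * L) (𝓝[>] 0) (𝓝 (0 * L)) :=
    tendsto_nhdsWithin_of_tendsto_nhds ((continuous_id.mul continuous_const).tendsto 0)
  have hx := ge_of_tendsto hlim (eventually_nhdsWithin_of_forall h)
  exact abs_nonpos_iff.mp (by simpa using hx)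

/-- Cauchy's Theorem 4 as rigorized by Peano: if the strict derivative of an
interval-additive set function `μ` with respect to length vanishes identically
on `[a,b]`, then `μ` vanishes on every compact subinterval. -/
theorem peano_vanishing_strict_derivative (a b : ℝ) (μ : ℝ → ℝ → ℝ)
    (hμ : IntervalAdditive a b μ)
    (h : PeanoStrictDeriv a b μ (fun _ => 0)) :
    ∀ c d : ℝ, a ≤ c → c ≤ d → d ≤ b → μ c d = 0 := by
  intro c d hac hcd hdb
  refine eq_zero_of_forall_abs_le_mul (L := d - c) fun ε hε => ?_
  obtain ⟨η, hη, hshort⟩ := h.exists_pos_abs_le_mul_of_zero hε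
  exact hμ.abs_le_mul_of_forall_lt hη hshort hac hcd hdb
end

section
/- Let ρ : [θ₀, θ₁] → ℝ be continuous and nonnegative with θ₁ - θ₀ ≤ 2π. Then the planar region S = {(r cos θ, r sin θ) : θ ∈ [θ₀, θ₁], 0 ≤ r ≤ ρ(θ)} has area (Lebesgue measure) equal to (1/2) ∫_{θ₀}^{θ₁} ρ(θ)² dθ. -/
/-!
The region is the image under `(r, θ) ↦ (r cos θ, r sin θ)` of the subgraph
`{(r, θ) | θ ∈ [θ₀, θ₁], 0 ≤ r ≤ ρ θ}`. Up to the null set where `r = 0` or `θ ∈ {θ₀, θ₁}`,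
which has null image, this map is injective on the subgraph because `θ₁ - θ₀ ≤ 2π`, and its
Jacobian is `r`. The change of variables formula and Fubini then give
`∫ θ, ∫ r in 0..ρ θ, r = ∫ θ, ρ θ ^ 2 / 2`.
-/

open MeasureTheory Real Set

def polarSubgraph (I : Set ℝ) (ρ : ℝ → ℝ) : Set (ℝ × ℝ) :=
  {p | p.2 ∈ I ∧ p.1 ∈ Icc 0 (ρ p.2)}

theorem image_polarCoord_symm_polarSubgraph (I : Set ℝ) (ρ : ℝ → ℝ) :
    polarCoord.symm '' polarSubgraph I ρ =
      {p | ∃ θ ∈ I, ∃ r : ℝ, 0 ≤ r ∧ r ≤ ρ θ ∧ p = (r * cos θ, r * sin θ)} := by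
  ext p
  simp only [polarSubgraph, mem_image, mem_ofPred_eq, mem_Icc, Prod.exists, polarCoord_symm_apply]
  constructor
  · rintro ⟨r, θ, ⟨hθ, hr0, hrρ⟩, rfl⟩
    exact ⟨θ, hθ, r, hr0, hrρ, rfl⟩
  · rintro ⟨θ, hθ, r, hr0, hrρ, rfl⟩
    exact ⟨r, θ, ⟨hθ, hr0, hrρ⟩, rfl⟩

theorem injOn_polarCoord_symm_of_sub_le {a b : ℝ} (hab : b - a ≤ 2 * π) :
    InjOn polarCoord.symm (Ioi 0 ×ˢ Ioo a b) := by
  rintro ⟨r, θ⟩ ⟨hr, hθ⟩ ⟨r', θ'⟩ ⟨hr', hθ'⟩ h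
  simp only [polarCoord_symm_apply, Prod.mk.injEq] at h ⊢
  obtain ⟨hcos, hsin⟩ := h
  have hsq : r ^ 2 = r' ^ 2 := by
    linear_combination (r * cos θ + r' * cos θ') * hcos + (r * sin θ + r' * sin θ') * hsin
      - r ^ 2 * sin_sq_add_cos_sq θ + r' ^ 2 * sin_sq_add_cos_sq θ'
  obtain rfl : r = r' := (pow_left_inj₀ hr.le hr'.le two_ne_zero).mp hsq
  refine ⟨rfl, ?_⟩
  have hangle : (θ : Angle) = θ' :=
    Angle.cos_sin_inj (mul_left_cancel₀ hr.ne' hcos) (mul_left_cancel₀ hr.ne' hsin)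
  have : Fact (0 < 2 * π) := ⟨two_pi_pos⟩
  have hIoc : Ioo a b ⊆ Ioc a (a + 2 * π) := fun x hx => ⟨hx.1, by linarith [hx.2]⟩
  exact (AddCircle.coe_eq_coe_iff_of_mem_Ioc (hIoc hθ) (hIoc hθ')).mp hangle

theorem volume_image_polarCoord_symm {s : Set (ℝ × ℝ)} (hs : MeasurableSet s)
    (hinj : InjOn polarCoord.symm s) :
    volume (polarCoord.symm '' s) = ∫⁻ p in s, ENNReal.ofReal |p.1| := by
  rw [← lintegral_abs_det_fderiv_eq_addHaar_image volume hs
    (fun p _ => (hasFDerivAt_polarCoord_symm p).hasFDerivWithinAt) hinj]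
  simp only [det_fderivPolarCoordSymm]

theorem addHaar_image_eq_of_measure_diff_eq_zero {E : Type*} [NormedAddCommGroup E]
    [NormedSpace ℝ E] [FiniteDimensional ℝ E] [MeasurableSpace E] [BorelSpace E]
    (μ : Measure E) [μ.IsAddHaarMeasure] {f : E → E} {s t : Set E}
    (hf : DifferentiableOn ℝ f t) (hst : s ⊆ t) (hts : μ (t \ s) = 0) :
    μ (f '' s) = μ (f '' t) := by
  refine le_antisymm (measure_mono (image_mono hst)) ?_
  calc μ (f '' t) ≤ μ (f '' s ∪ f '' (t \ s)) := by
        rw [← image_union, union_sdiff_cancel hst]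
    _ ≤ μ (f '' s) + μ (f '' (t \ s)) := measure_union_le _ _
    _ = μ (f '' s) := by
        rw [addHaar_image_eq_zero_of_differentiableOn_of_addHaar_eq_zero μ
          (hf.mono sdiff_subset) hts, add_zero]

theorem setLIntegral_Ioc_zero_ofReal {c : ℝ} (hc : 0 ≤ c) :
    ∫⁻ r in Ioc 0 c, ENNReal.ofReal r = ENNReal.ofReal (c ^ 2 / 2) := by
  have hint : IntegrableOn (fun r : ℝ => r) (Ioc 0 c) := continuous_id.integrableOn_Ioc
  have hnonneg : 0 ≤ᵐ[volume.restrict (Ioc 0 c)] fun r : ℝ => r :=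
    (ae_restrict_iff' measurableSet_Ioc).mpr (Filter.Eventually.of_forall fun r hr => hr.1.le)
  rw [← ofReal_integral_eq_lintegral_ofReal hint hnonneg, ← intervalIntegral.integral_of_le hc,
    integral_id]
  norm_num

theorem measurableSet_fibers_Ioc {I : Set ℝ} (hI : MeasurableSet I) {ρ : ℝ → ℝ}
    (hρ : Measurable ρ) : MeasurableSet {p : ℝ × ℝ | p.2 ∈ I ∧ p.1 ∈ Ioc 0 (ρ p.2)} :=
  (measurable_snd hI).inter ((measurableSet_lt measurable_const measurable_fst).inter
    (measurableSet_le measurable_fst (hρ.comp measurable_snd)))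

theorem setLIntegral_ofReal_fst_of_fibers_Ioc {I : Set ℝ} (hI : MeasurableSet I) {ρ : ℝ → ℝ}
    (hρ : Measurable ρ) (hρ0 : ∀ θ ∈ I, 0 ≤ ρ θ) :
    ∫⁻ p in {p : ℝ × ℝ | p.2 ∈ I ∧ p.1 ∈ Ioc 0 (ρ p.2)}, ENNReal.ofReal p.1 =
      ∫⁻ θ in I, ENNReal.ofReal (ρ θ ^ 2 / 2) := by
  set s := {p : ℝ × ℝ | p.2 ∈ I ∧ p.1 ∈ Ioc 0 (ρ p.2)}
  have hs : MeasurableSet s := measurableSet_fibers_Ioc hI hρ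
  have hfiber : ∀ θ, (fun r => s.indicator (fun p => ENNReal.ofReal p.1) (r, θ)) =
      I.indicator (fun θ => (Ioc 0 (ρ θ)).indicator ENNReal.ofReal) θ := by
    intro θ
    by_cases hθ : θ ∈ I <;> ext r <;> simp [s, indicator, hθ]
  rw [← lintegral_indicator hs, Measure.volume_eq_prod, lintegral_prod_symm _
    (measurable_fst.ennreal_ofReal.indicator hs).aemeasurable,
    ← lintegral_indicator hI]
  refine lintegral_congr fun θ => ?_
  rw [hfiber]
  by_cases hθ : θ ∈ I
  · simp only [indicator_of_mem hθ]
    rw [lintegral_indicator measurableSet_Ioc, setLIntegral_Ioc_zero_ofReal (hρ0 θ hθ)]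
  · simp only [indicator_of_notMem hθ, lintegral_zero_fun]

theorem volume_image_polarCoord_symm_polarSubgraph {θ₀ θ₁ : ℝ} (h2π : θ₁ - θ₀ ≤ 2 * π)
    {ρ : ℝ → ℝ} (hρ : Measurable ρ) (hρ0 : ∀ θ ∈ Icc θ₀ θ₁, 0 ≤ ρ θ) :
    volume (polarCoord.symm '' polarSubgraph (Icc θ₀ θ₁) ρ) =
      ∫⁻ θ in Icc θ₀ θ₁, ENNReal.ofReal (ρ θ ^ 2 / 2) := by
  set s := {p : ℝ × ℝ | p.2 ∈ Ioo θ₀ θ₁ ∧ p.1 ∈ Ioc 0 (ρ p.2)}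
  set t := polarSubgraph (Icc θ₀ θ₁) ρ
  have hs : MeasurableSet s := measurableSet_fibers_Ioc measurableSet_Ioo hρ
  have hst : s ⊆ t := fun p hp => ⟨Ioo_subset_Icc_self hp.1, Ioc_subset_Icc_self hp.2⟩
  have hts : volume (t \ s) = 0 := by
    refine measure_mono_null (t := Prod.fst ⁻¹' {0} ∪ Prod.snd ⁻¹' {θ₀, θ₁}) ?_
      (measure_union_null (Measure.quasiMeasurePreserving_fst.preimage_null volume_singleton)
        (Measure.quasiMeasurePreserving_snd.preimage_null ((toFinite _).measure_zero volume)))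
    rintro ⟨r, θ⟩ ⟨⟨hθ, hr⟩, hnot⟩
    simp only [s, mem_ofPred_eq, mem_Ioo, mem_Ioc, not_and_or, not_lt] at hnot
    simp only [mem_union, mem_preimage, mem_singleton_iff, mem_insert_iff]
    rcases hnot with (h | h) | h | h
    · exact Or.inr (Or.inl (le_antisymm h hθ.1))
    · exact Or.inr (Or.inr (le_antisymm hθ.2 h))
    · exact Or.inl (le_antisymm h hr.1)
    · exact absurd hr.2 h
  calc volume (polarCoord.symm '' t) = volume (polarCoord.symm '' s) :=
        (addHaar_image_eq_of_measure_diff_eq_zero volume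
          (fun p _ => (hasFDerivAt_polarCoord_symm p).differentiableAt.differentiableWithinAt)
          hst hts).symm
    _ = ∫⁻ p in s, ENNReal.ofReal |p.1| :=
        volume_image_polarCoord_symm hs
          ((injOn_polarCoord_symm_of_sub_le h2π).mono fun _ hp => mem_prod.mpr ⟨hp.2.1, hp.1⟩)
    _ = ∫⁻ p in s, ENNReal.ofReal p.1 :=
        setLIntegral_congr_fun hs fun p hp => by rw [abs_of_pos hp.2.1]
    _ = ∫⁻ θ in Ioo θ₀ θ₁, ENNReal.ofReal (ρ θ ^ 2 / 2) :=
        setLIntegral_ofReal_fst_of_fibers_Ioc measurableSet_Ioo hρ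
          fun θ hθ => hρ0 θ (Ioo_subset_Icc_self hθ)
    _ = ∫⁻ θ in Icc θ₀ θ₁, ENNReal.ofReal (ρ θ ^ 2 / 2) := setLIntegral_congr Ioo_ae_eq_Icc

/-- Peano's polar-coordinate area formula (1887, p. 199): the area of the
star-shaped region bounded by the continuous curve `r = ρ(θ)`, `θ ∈ [θ₀, θ₁]`,
equals `(1/2) ∫ ρ(θ)² dθ`. -/
theorem polar_area_formula (θ₀ θ₁ : ℝ) (h01 : θ₀ ≤ θ₁) (h2π : θ₁ - θ₀ ≤ 2 * π)
    (ρ : ℝ → ℝ) (hρ : ContinuousOn ρ (Set.Icc θ₀ θ₁))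
    (hρ0 : ∀ θ ∈ Set.Icc θ₀ θ₁, 0 ≤ ρ θ) :
    volume {p : ℝ × ℝ | ∃ θ ∈ Set.Icc θ₀ θ₁, ∃ r : ℝ, 0 ≤ r ∧ r ≤ ρ θ ∧
        p = (r * cos θ, r * sin θ)} =
      ENNReal.ofReal ((1 / 2) * ∫ θ in θ₀..θ₁, ρ θ ^ 2) := by
  -- a global extension of `ρ`, so that its subgraph is measurable
  set ρ' := IccExtend h01 (domRestrict (Icc θ₀ θ₁) ρ)
  have hρ' : Continuous ρ' := continuous_IccExtend_iff.mpr hρ.domRestrict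
  have hρ'ρ : EqOn ρ' ρ (Icc θ₀ θ₁) := fun θ hθ => IccExtend_of_mem h01 _ hθ
  have hsubgraph : polarSubgraph (Icc θ₀ θ₁) ρ = polarSubgraph (Icc θ₀ θ₁) ρ' :=
    ext fun p => and_congr_right fun hθ => by rw [hρ'ρ hθ]
  have hint : IntegrableOn (fun θ => ρ θ ^ 2 / 2) (Icc θ₀ θ₁) :=
    ((hρ.pow 2).div_const 2).integrableOn_Icc
  rw [← image_polarCoord_symm_polarSubgraph, hsubgraph,
    volume_image_polarCoord_symm_polarSubgraph h2π hρ'.measurable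
      fun θ hθ => hρ'ρ hθ ▸ hρ0 θ hθ,
    setLIntegral_congr_fun measurableSet_Icc fun θ hθ => by rw [hρ'ρ hθ],
    ← ofReal_integral_eq_lintegral_ofReal hint
      (Filter.Eventually.of_forall fun θ => by positivity),
    integral_Icc_eq_integral_Ioc, ← intervalIntegral.integral_of_le h01,
    intervalIntegral.integral_div, one_div_mul_eq_div]
end

section
/- Let F ⊆ ℝ³ be a compact set such that for every x ∈ [a,b] the boundary section (∂F)_x = {(y,z) : (x,y,z) ∈ ∂F} has 2-dimensional outer Jordan content zero, and F ⊆ [a,b] × ℝ². Then F is Jordan measurable and its volume equals ∫_a^b c₂(F_x) dx, where c₂(F_x) is the 2-dimensional Jordan content of the section F_x = {(y,z) : (x,y,z) ∈ F}. -/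
/-!
Both claims are Tonelli's theorem for the product `ℝ × ℝ²`. The frontier of `F` is a closed set
all of whose sections are null (those over `[a,b]` by hypothesis, the others being empty), so it is
null. Since `F` is compact, its measure is finite, so the integral of its section areas is finite
and may be computed as a Bochner integral over `[a,b]`.
-/

open MeasureTheory Set

theorem Set.preimage_prodMk_eq_empty_of_notMem {α β : Type*} {s : Set (α × β)} {t : Set α}
    (hst : ∀ p ∈ s, p.1 ∈ t) {x : α} (hx : x ∉ t) : Prod.mk x ⁻¹' s = ∅ :=
  eq_empty_of_forall_notMem fun _ hy => hx (hst _ hy)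

namespace MeasureTheory.Measure

variable {α β : Type*} [MeasurableSpace α] [MeasurableSpace β]

theorem prod_null_of_sections_null {μ : Measure α} {ν : Measure β} {s : Set (α × β)}
    {t : Set α} (hs : MeasurableSet s) (hst : ∀ p ∈ s, p.1 ∈ t)
    (hsec : ∀ x ∈ t, ν (Prod.mk x ⁻¹' s) = 0) : μ.prod ν s = 0 := by
  refine measure_prod_null_of_ae_null hs (Filter.Eventually.of_forall fun x => ?_)
  by_cases hx : x ∈ t
  · exact hsec x hx
  · simp [preimage_prodMk_eq_empty_of_notMem hst hx]

theorem volume_prod_eq_ofReal_intervalIntegral {ν : Measure β} [SFinite ν] {a b : ℝ}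
    (hab : a ≤ b) {s : Set (ℝ × β)} (hs : MeasurableSet s) (hst : ∀ p ∈ s, p.1 ∈ Icc a b)
    (hfin : volume.prod ν s ≠ ⊤) :
    volume.prod ν s = ENNReal.ofReal (∫ x in a..b, (ν (Prod.mk x ⁻¹' s)).toReal) := by
  set g : ℝ → ENNReal := fun x => ν (Prod.mk x ⁻¹' s)
  have hg : Measurable g := measurable_measure_prodMk_left hs
  have hprod : volume.prod ν s = ∫⁻ x in Ioc a b, g x := by
    have hsupp : Function.support g ⊆ Icc a b := fun x hx => by
      by_contra hxt
      exact hx (by simp [g, preimage_prodMk_eq_empty_of_notMem hst hxt])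
    rw [prod_apply hs, ← setLIntegral_eq_of_support_subset hsupp,
      setLIntegral_congr Ioc_ae_eq_Icc]
  have hg_lt_top : ∀ᵐ x ∂volume.restrict (Ioc a b), g x < ⊤ :=
    ae_lt_top hg (hprod ▸ hfin)
  rw [intervalIntegral.integral_of_le hab, integral_toReal hg.aemeasurable hg_lt_top,
    ENNReal.ofReal_toReal (hprod ▸ hfin), hprod]

end MeasureTheory.Measure

open MeasureTheory.Measure in
/-- Peano's Cavalieri formula for volumes (1887, p. 221): if every section of
the boundary of a compact set `F ⊆ [a,b] × ℝ²` perpendicular to the `x`-axis is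
a planar null set, then `F` is Jordan measurable and its volume is the integral
of the areas of its sections. -/
theorem cavalieri_volume_formula (a b : ℝ) (hab : a ≤ b) (F : Set (ℝ × ℝ × ℝ))
    (hFc : IsCompact F) (hFsub : ∀ p ∈ F, p.1 ∈ Set.Icc a b)
    (hsec : ∀ x ∈ Set.Icc a b,
      volume {q : ℝ × ℝ | (x, q.1, q.2) ∈ frontier F} = 0) :
    volume (frontier F) = 0 ∧
      volume F = ENNReal.ofReal
        (∫ x in a..b, (volume {q : ℝ × ℝ | (x, q.1, q.2) ∈ F}).toReal) := by
  have hfrontier_sub : ∀ p ∈ frontier F, p.1 ∈ Icc a b :=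
    fun p hp => hFsub p (hFc.isClosed.frontier_subset hp)
  rw [volume_eq_prod]
  exact ⟨prod_null_of_sections_null isClosed_frontier.measurableSet hfrontier_sub hsec,
    volume_prod_eq_ofReal_intervalIntegral hab hFc.isClosed.measurableSet hFsub
      (by rw [← volume_eq_prod]; exact hFc.measure_lt_top.ne)⟩
end

section
/- Let (X, 𝒜) be a measurable space, μ, ν finite countably additive measures on 𝒜 with ν ≥ 0, and g : X → ℝ a measurable function. Then μ(A) = ∫_A g dν for all A ∈ 𝒜 if and only if for every real number a: (1) μ(A) ≥ a·ν(A) for every A ∈ 𝒜 with A ⊆ {x : g(x) ≥ a}, and (2) μ(A) ≤ a·ν(A) for every A ∈ 𝒜 with A ⊆ {x : g(x) ≤ a}. -/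
/-!
The forward direction is monotonicity of the integral. Conversely, cut `X` into the slabs
`{k ε ≤ g < (k + 1) ε}`, `k ∈ ℤ`. On a measurable subset `A` of a slab both `μ A` and
`∫_A g dν` lie in `[k ε ν(A), (k + 1) ε ν(A)]`, so they differ by at most `ε ν(A)`; by countable
additivity this bound passes to every measurable `A`, and letting `ε → 0` gives `μ A = ∫_A g dν`.
-/

open MeasureTheory Set Function

theorem eq_zero_of_forall_pos_abs_le_mul {x t : ℝ} (h : ∀ ε > 0, |x| ≤ ε * t) : x = 0 := by
  refine abs_nonpos_iff.1 (le_of_forall_pos_le_add fun δ hδ => ?_)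
  have hε : 0 < δ / (|t| + 1) := by positivity
  calc |x| ≤ δ / (|t| + 1) * t := h _ hε
    _ ≤ δ / (|t| + 1) * (|t| + 1) := by gcongr; linarith [le_abs_self t]
    _ = 0 + δ := by field_simp; ring

namespace MeasureTheory

variable {X : Type*} [MeasurableSpace X]

theorem setIntegral_le_of_le_const_real {ν : Measure X} {f : X → ℝ} {c : ℝ} {s : Set X}
    (hs : MeasurableSet s) (hνs : ν s ≠ ⊤) (hf : ∀ x ∈ s, f x ≤ c)
    (hfint : IntegrableOn f s ν) : ∫ x in s, f x ∂ν ≤ c * ν.real s := by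
  simpa [integral_neg] using setIntegral_ge_of_const_le_real (f := fun x => -f x) (c := -c) hs hνs
    (fun x hx => neg_le_neg (hf x hx)) hfint.neg

theorem SignedMeasure.abs_le_mul_measureReal_of_iUnion {ι : Type*} [Countable ι]
    (ρ : SignedMeasure X) (ν : Measure X) [IsFiniteMeasure ν] {B : ι → Set X}
    (hBm : ∀ k, MeasurableSet (B k)) (hdisj : Pairwise (Disjoint on B)) (hcover : ⋃ k, B k = univ)
    {c : ℝ} (hc : ∀ k A, MeasurableSet A → A ⊆ B k → |ρ A| ≤ c * ν.real A)
    {A : Set X} (hA : MeasurableSet A) : |ρ A| ≤ c * ν.real A := by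
  have hpieces : ⋃ k, A ∩ B k = A := by rw [← inter_iUnion, hcover, inter_univ]
  have hm : ∀ k, MeasurableSet (A ∩ B k) := fun k => hA.inter (hBm k)
  have hd : Pairwise (Disjoint on fun k => A ∩ B k) :=
    fun i j hij => (hdisj hij).mono inter_subset_right inter_subset_right
  have hρ := VectorMeasure.hasSum_of_disjoint_iUnion (v := ρ) hm hd
  have hν := VectorMeasure.hasSum_of_disjoint_iUnion (v := ν.toSignedMeasure) hm hd
  rw [hpieces] at hρ hν
  simp only [Measure.toSignedMeasure_apply_measurable hA,
    Measure.toSignedMeasure_apply_measurable (hm _)] at hν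
  exact hρ.norm_le_of_bounded (hν.mul_left c)
    fun k => hc k _ (hm k) inter_subset_right

theorem SignedMeasure.eq_withDensityᵥ_of_forall_le_of_forall_le (μ : SignedMeasure X)
    (ν : Measure X) [IsFiniteMeasure ν] {g : X → ℝ} (hgm : Measurable g) (hgi : Integrable g ν)
    (hge : ∀ a A, MeasurableSet A → A ⊆ {x | a ≤ g x} → a * ν.real A ≤ μ A)
    (hle : ∀ a A, MeasurableSet A → A ⊆ {x | g x ≤ a} → μ A ≤ a * ν.real A) :
    μ = ν.withDensityᵥ g := by
  set ρ := μ - ν.withDensityᵥ g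
  have hρ : ∀ A, MeasurableSet A → ρ A = μ A - ∫ x in A, g x ∂ν := fun A hA => by
    rw [_root_.sub_apply, withDensityᵥ_apply hgi hA]
  have hslab : ∀ ε > 0, ∀ (k : ℤ) A, MeasurableSet A → A ⊆ g ⁻¹' Ico (k • ε) ((k + 1) • ε) →
      |ρ A| ≤ ε * ν.real A := by
    intro ε hε k A hA hsub
    have hlo : ∀ x ∈ A, k • ε ≤ g x := fun x hx => (hsub hx).1
    have hhi : ∀ x ∈ A, g x ≤ (k + 1) • ε := fun x hx => (hsub hx).2.le
    have hμlo := hge (k • ε) A hA hlo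
    have hμhi := hle ((k + 1) • ε) A hA hhi
    have hIlo := setIntegral_ge_of_const_le_real hA (measure_ne_top ν A) hlo hgi.integrableOn
    have hIhi := setIntegral_le_of_le_const_real hA (measure_ne_top ν A) hhi hgi.integrableOn
    rw [add_one_zsmul] at hμhi hIhi
    rw [hρ A hA, abs_sub_le_iff]
    constructor <;> linarith
  have hbound : ∀ A, MeasurableSet A → ∀ ε > 0, |ρ A| ≤ ε * ν.real A := fun A hA ε hε =>
    ρ.abs_le_mul_measureReal_of_iUnion ν (fun k => hgm measurableSet_Ico)
      ((pairwise_disjoint_Ico_zsmul ε).mono fun _ _ => Disjoint.preimage g)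
      (by rw [← preimage_iUnion, iUnion_Ico_zsmul hε, preimage_univ]) (hslab ε hε) hA
  ext A hA
  rw [withDensityᵥ_apply hgi hA]
  exact sub_eq_zero.1 ((hρ A hA).symm.trans (eq_zero_of_forall_pos_abs_le_mul (hbound A hA)))

end MeasureTheory

/-- Hahn-decomposition characterization of the Radon–Nikodym derivative
(Nikodym 1930): a finite signed measure `μ` has density `g` with respect to a
finite nonnegative measure `ν` iff for every real `a`, `μ(A) ≥ a·ν(A)` on
measurable subsets of `{g ≥ a}` and `μ(A) ≤ a·ν(A)` on measurable subsets of
`{g ≤ a}`. -/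
theorem radon_nikodym_hahn_characterization {X : Type*} [MeasurableSpace X]
    (μ : SignedMeasure X) (ν : Measure X) [IsFiniteMeasure ν]
    (g : X → ℝ) (hgm : Measurable g) (hgi : Integrable g ν) :
    (∀ A : Set X, MeasurableSet A → μ A = ∫ x in A, g x ∂ν) ↔
      (∀ a : ℝ,
        (∀ A : Set X, MeasurableSet A → A ⊆ {x | a ≤ g x} →
          a * (ν A).toReal ≤ μ A) ∧
        (∀ A : Set X, MeasurableSet A → A ⊆ {x | g x ≤ a} →
          μ A ≤ a * (ν A).toReal)) := by
  refine ⟨fun h a => ⟨fun A hA hsub => ?_, fun A hA hsub => ?_⟩, fun h A hA => ?_⟩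
  · rw [h A hA]
    exact setIntegral_ge_of_const_le_real hA (measure_ne_top ν A) hsub hgi.integrableOn
  · rw [h A hA]
    exact setIntegral_le_of_le_const_real hA (measure_ne_top ν A) hsub hgi.integrableOn
  · rw [μ.eq_withDensityᵥ_of_forall_le_of_forall_le ν hgm hgi (fun a => (h a).1) fun a => (h a).2,
      withDensityᵥ_apply hgi hA]
end

section
/- Let ℱ be a family of subsets of ℝⁿ that is semi-distributive by cutting along coordinate hyperplanes: for every A ∈ ℱ and every hyperplane H = {x : x_i = a}, either A ∩ H⁺ ∈ ℱ or A ∩ H⁻ ∈ ℱ, where H⁺, H⁻ are the two closed half-spaces bounded by H. If S ∈ ℱ is bounded and nonempty, then there exists a point x̄ in the closure of S such that every neighborhood of x̄ contains some member of ℱ. -/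
/-!
Bisecting a member of `ℱ` repeatedly along each coordinate hyperplane keeps a member of `ℱ`
inside `S` and shrinks it, coordinate by coordinate, into boxes of arbitrarily small width.
So `closure S`, which is compact, contains points that are arbitrarily close to whole members
of `ℱ`; by the Lebesgue number lemma one of its points has members of `ℱ` in all of its
neighbourhoods.
-/

open Set Topology Metric

theorem IsCompact.exists_forall_mem_nhds_exists_subset {X : Type*} [PseudoMetricSpace X]
    {K : Set X} (hK : IsCompact K) (ℱ : Set (Set X))
    (hsmall : ∀ δ > 0, ∃ A ∈ ℱ, ∃ y ∈ K, A ⊆ ball y δ) :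
    ∃ x ∈ K, ∀ U ∈ 𝓝 x, ∃ A ∈ ℱ, A ⊆ U := by
  by_contra! H
  choose! U hU hUℱ using H
  obtain ⟨δ, hδ, hleb⟩ := lebesgue_number_lemma_of_metric hK (c := fun x : K => interior (U x))
    (fun _ => isOpen_interior)
    (fun x hx => mem_iUnion.2 ⟨⟨x, hx⟩, mem_interior_iff_mem_nhds.2 (hU x hx)⟩)
  obtain ⟨A, hA, y, hy, hAy⟩ := hsmall δ hδ
  obtain ⟨⟨x, hx⟩, hyx⟩ := hleb y hy
  exact hUℱ x hx A hA (hAy.trans (hyx.trans interior_subset))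

section Bisection

variable {X : Type*}

def SemidistributiveAlong (ℱ : Set (Set X)) (f : X → ℝ) : Prop :=
  ∀ A ∈ ℱ, ∀ a, A ∩ f ⁻¹' Iic a ∈ ℱ ∨ A ∩ f ⁻¹' Ici a ∈ ℱ

variable {ℱ : Set (Set X)}

theorem exists_subset_preimage_Icc_div_two_pow {f : X → ℝ}
    (hcut : SemidistributiveAlong ℱ f)
    {A : Set X} (hA : A ∈ ℱ) {a b : ℝ} (hAab : A ⊆ f ⁻¹' Icc a b) (k : ℕ) :
    ∃ B ∈ ℱ, B ⊆ A ∧ ∃ c, B ⊆ f ⁻¹' Icc c (c + (b - a) / 2 ^ k) := by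
  induction k with
  | zero => exact ⟨A, hA, subset_rfl, a, by simpa using hAab⟩
  | succ k ih =>
    obtain ⟨B, hB, hBA, c, hBc⟩ := ih
    set w := (b - a) / 2 ^ k
    have hw : (b - a) / 2 ^ (k + 1) = w / 2 := by rw [pow_succ, div_div]
    rw [hw]
    rcases hcut B hB (c + w / 2) with hlow | hhigh
    · exact ⟨_, hlow, inter_subset_left.trans hBA, c, fun x hx => ⟨(hBc hx.1).1, hx.2⟩⟩
    · refine ⟨_, hhigh, inter_subset_left.trans hBA, c + w / 2, fun x hx => ⟨hx.2, ?_⟩⟩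
      have : f x ≤ c + w := (hBc hx.1).2
      show f x ≤ c + w / 2 + w / 2
      linarith

theorem exists_subset_preimage_Icc_of_isBounded_image {f : X → ℝ}
    (hcut : SemidistributiveAlong ℱ f)
    {A : Set X} (hA : A ∈ ℱ) (hAb : Bornology.IsBounded (f '' A)) {ε : ℝ} (hε : 0 < ε) :
    ∃ B ∈ ℱ, B ⊆ A ∧ ∃ c, B ⊆ f ⁻¹' Icc c (c + ε) := by
  set a := sInf (f '' A)
  set b := sSup (f '' A)
  have hAab : A ⊆ f ⁻¹' Icc a b := image_subset_iff.1 hAb.subset_Icc_sInf_sSup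
  obtain ⟨k, hk⟩ := pow_unbounded_of_one_lt ((b - a) / ε) one_lt_two
  have hwidth : (b - a) / 2 ^ k ≤ ε := by
    rw [div_lt_iff₀ hε] at hk
    rw [div_le_iff₀ (by positivity)]
    linarith
  obtain ⟨B, hB, hBA, c, hBc⟩ := exists_subset_preimage_Icc_div_two_pow hcut hA hAab k
  exact ⟨B, hB, hBA, c, hBc.trans (preimage_mono (Icc_subset_Icc_right (by linarith)))⟩

theorem exists_subset_forall_preimage_Icc {ι : Type*} {f : ι → X → ℝ}
    (hcut : ∀ i, SemidistributiveAlong ℱ (f i))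
    (s : Finset ι) {A : Set X} (hA : A ∈ ℱ) (hAb : ∀ i ∈ s, Bornology.IsBounded (f i '' A))
    {ε : ℝ} (hε : 0 < ε) :
    ∃ B ∈ ℱ, B ⊆ A ∧ ∀ i ∈ s, ∃ c, B ⊆ f i ⁻¹' Icc c (c + ε) := by
  classical
  induction s using Finset.induction_on with
  | empty => exact ⟨A, hA, subset_rfl, by simp⟩
  | insert j s _ ih =>
    obtain ⟨B, hB, hBA, hBs⟩ := ih fun i hi => hAb i (Finset.mem_insert_of_mem hi)
    obtain ⟨C, hC, hCB, hCj⟩ := exists_subset_preimage_Icc_of_isBounded_image (hcut j) hB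
      ((hAb j (Finset.mem_insert_self j s)).subset (image_mono hBA)) hε
    refine ⟨C, hC, hCB.trans hBA, (Finset.forall_mem_insert _ _ _).2 ⟨hCj, fun i hi => ?_⟩⟩
    obtain ⟨c, hc⟩ := hBs i hi
    exact ⟨c, hCB.trans hc⟩

end Bisection

/-- Cantor–Peano compactness property for families semi-distributive by cutting
along coordinate hyperplanes: if `ℱ` is such a family of subsets of `ℝⁿ` and
`S ∈ ℱ` is bounded and nonempty, then some point of the closure of `S` has
members of `ℱ` in each of its neighborhoods. -/
theorem cantor_compactness_semidistributive {n : ℕ}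
    (ℱ : Set (Set (Fin n → ℝ)))
    (hcut : ∀ A ∈ ℱ, ∀ (i : Fin n) (a : ℝ),
      A ∩ {x | x i ≤ a} ∈ ℱ ∨ A ∩ {x | a ≤ x i} ∈ ℱ)
    (S : Set (Fin n → ℝ)) (hS : S ∈ ℱ) (hSb : Bornology.IsBounded S)
    (hSne : S.Nonempty) :
    ∃ x ∈ closure S, ∀ U ∈ nhds x, ∃ A ∈ ℱ, A ⊆ U := by
  refine hSb.isCompact_closure.exists_forall_mem_nhds_exists_subset ℱ fun δ hδ => ?_
  obtain ⟨B, hB, hBS, hBbox⟩ := exists_subset_forall_preimage_Icc (f := fun i (x : Fin n → ℝ) => x i)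
    (fun i A hA a => hcut A hA i a) Finset.univ hS (fun i _ => hSb.image_eval i) (half_pos hδ)
  rcases B.eq_empty_or_nonempty with rfl | ⟨y, hy⟩
  · exact ⟨∅, hB, hSne.some, subset_closure hSne.some_mem, empty_subset _⟩
  refine ⟨B, hB, y, subset_closure (hBS hy), fun z hz => ?_⟩
  have hzy : dist z y ≤ δ / 2 := (dist_pi_le_iff (half_pos hδ).le).2 fun i => by
    obtain ⟨c, hc⟩ := hBbox i (Finset.mem_univ i)
    simpa using Real.dist_le_of_mem_Icc (hc hz) (hc hy)
  exact mem_ball.2 (hzy.trans_lt (half_lt_self hδ))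
end

section
/- Let μ : {compact subintervals of [a,b]} → ℝ be interval-additive with strict derivative g with respect to length on [a,b], and assume there exists an interval I₀ with length ν(I₀) > 0. If g is constant equal to c on [a,b], then μ(I) = c·(length of I) for every compact subinterval I of [a,b]. -/
/-!
Interval-additivity makes the slope of the primitive `t ↦ μ [a,t]` between two points the
average `μ I / |I|` over the interval `I` they span, so the strict derivative of `μ` is a
derivative of the primitive within `[a,b]`. When it is the constant `c`,
the primitive minus `c t` has zero derivative on `[a,b]`, hence is constant by the mean value
inequality, and additivity turns this back into `μ [c',d'] = c (d' - c')`.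
-/

open Set

section

variable {a b : ℝ} {μ : ℝ → ℝ → ℝ}

theorem IntervalAdditive.slope_primitive (hμ : IntervalAdditive a b μ) {s t : ℝ}
    (has : a ≤ s) (hst : s ≤ t) (htb : t ≤ b) :
    slope (μ a ·) s t = μ s t / (t - s) := by
  rw [slope_def_field, hμ a s t le_rfl has hst htb, add_sub_cancel_left]

theorem PeanoStrictDeriv.hasDerivWithinAt_primitive {g : ℝ → ℝ}
    (h : PeanoStrictDeriv a b μ g) (hμ : IntervalAdditive a b μ) {x : ℝ} (hx : x ∈ Icc a b) :
    HasDerivWithinAt (μ a ·) (g x) (Icc a b) x := by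
  rw [hasDerivWithinAt_iff_tendsto_slope, Metric.tendsto_nhdsWithin_nhds]
  intro ε hε
  obtain ⟨δ, hδ, hclose⟩ := h x hx ε hε
  refine ⟨δ, hδ, fun t ⟨⟨hat, htb⟩, htx⟩ hdist => ?_⟩
  rw [Real.dist_eq] at hdist ⊢
  obtain ⟨hlo, hhi⟩ := abs_lt.mp hdist
  rcases lt_or_gt_of_ne (htx : t ≠ x) with hlt | hgt
  · rw [slope_comm, hμ.slope_primitive hat hlt.le hx.2]
    exact hclose t x hat hlt hx.2 (Icc_subset_Ioo (by linarith) (by linarith))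
  · rw [hμ.slope_primitive hx.1 hgt.le htb]
    exact hclose x t hx.1 hgt htb (Icc_subset_Ioo (by linarith) (by linarith))

end

theorem peano_constant_strict_derivative_general (a b : ℝ)
    (μ : ℝ → ℝ → ℝ) (hμ : IntervalAdditive a b μ) (c : ℝ)
    (h : PeanoStrictDeriv a b μ (fun _ => c)) :
    ∀ c' d' : ℝ, a ≤ c' → c' ≤ d' → d' ≤ b → μ c' d' = c * (d' - c') := by
  intro c' d' hac hcd hdb
  have hderiv : ∀ x ∈ Icc a b, HasDerivWithinAt (fun t => μ a t - c * t) 0 (Icc a b) x :=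
    fun x hx => ((h.hasDerivWithinAt_primitive hμ hx).sub
      ((hasDerivWithinAt_id x _).const_mul c)).congr_deriv (by simp)
  have hconst := (convex_Icc a b).norm_image_sub_le_of_norm_hasDerivWithin_le hderiv
    (fun _ _ => norm_zero.le) ⟨hac, hcd.trans hdb⟩ ⟨hac.trans hcd, hdb⟩
  rw [zero_mul, norm_le_zero_iff] at hconst
  linarith [hμ a c' d' le_rfl hac hcd hdb]

/-- Peano's corollary (1887, p. 171): if the strict derivative of `μ` with
respect to length is the constant `c` on `[a,b]` (with `a < b`, so that some
interval has positive length), then `μ I = c · |I|` for every compact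
subinterval `I` of `[a,b]`. -/
theorem peano_constant_strict_derivative (a b : ℝ) (hab : a < b)
    (μ : ℝ → ℝ → ℝ) (hμ : IntervalAdditive a b μ) (c : ℝ)
    (h : PeanoStrictDeriv a b μ (fun _ => c)) :
    ∀ c' d' : ℝ, a ≤ c' → c' ≤ d' → d' ≤ b → μ c' d' = c * (d' - c') :=
  peano_constant_strict_derivative_general a b μ hμ c h
end
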